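/- Let Γ ⊂ ℝ^N be an embedded network with a Hamiltonian (H_γ) and a flux limiter (c_x). Then the Lagrangian L : ℝ^N×ℝ^N → ℝ ∪ {+∞} is lower semicontinuous. -/

import Mathlib

open Set MeasureTheory Filter Topology
open scoped Classical

noncomputable section

/-! #### Absolutely continuous curves and extended-real integrals -/

/-- `ξ` is absolutely continuous on `[a,b]`, with `ξ'` as a choice of its a.e. derivative:
`ξ'` is integrable on `[a,b]` and the fundamental theorem of calculus holds. -/
def IsACDerivOn {E : Type*} [NormedAddCommGroup E] [NormedSpace ℝ E]
    (a b : ℝ) (ξ ξ' : ℝ → E) : Prop :=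
  IntegrableOn ξ' (Icc a b) ∧ ∀ t ∈ Icc a b, ξ t = ξ a + ∫ τ in a..t, ξ' τ

/-- Extended-real integral on `[a,b]`, suited to integrands which are bounded from below:
it is the Bochner integral when the integrand is a.e. finite and integrable, `+∞` otherwise. -/
def eIntegral (a b : ℝ) (f : ℝ → EReal) : EReal :=
  if IntegrableOn (fun τ => (f τ).toReal) (Icc a b) ∧
      (∀ᵐ τ ∂(volume.restrict (Icc a b)), f τ ≠ ⊤ ∧ f τ ≠ ⊥) then
    (((∫ τ in Icc a b, (f τ).toReal) : ℝ) : EReal)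
  else ⊤

/-! #### One-dimensional Hamiltonians on `[0,1] × ℝ` -/

/-- Standing assumptions on a Hamiltonian `H : [0,1] × ℝ → ℝ`: continuity, convexity in the
momentum variable, and superlinearity in the momentum variable, uniformly in the state. -/
structure IsHamiltonian (H : ℝ → ℝ → ℝ) : Prop where
  cont : ContinuousOn (fun p : ℝ × ℝ => H p.1 p.2) (Icc 0 1 ×ˢ univ)
  convex : ∀ s ∈ Icc (0:ℝ) 1, ConvexOn ℝ univ fun μ => H s μ
  superlinear : ∀ A : ℝ, ∃ R : ℝ, ∀ s ∈ Icc (0:ℝ) 1, ∀ μ : ℝ, R ≤ |μ| → A * |μ| ≤ H s μ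

/-- The Lagrangian associated to `H` via the Fenchel transform:
`L(s,λ) = sup_μ (λ μ - H(s,μ))`. -/
def Lagr (H : ℝ → ℝ → ℝ) (s lam : ℝ) : ℝ :=
  sSup (range fun μ => lam * μ - H s μ)

/-- `c_H = - max_{s ∈ [0,1]} min_{μ ∈ ℝ} H(s,μ)`. -/
def cHam (H : ℝ → ℝ → ℝ) : ℝ :=
  - sSup ((fun s => sInf (range fun μ => H s μ)) '' Icc 0 1)

/-- The modified Lagrangian `L̄`, equal to `L` for `s ∉ {0,1}` and to
`L(s,λ) + c - L(s,0)` for `s ∈ {0,1}`. -/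
def Lbar (H : ℝ → ℝ → ℝ) (c : ℝ) (s lam : ℝ) : ℝ :=
  if s = 0 ∨ s = 1 then Lagr H s lam + c - Lagr H s 0 else Lagr H s lam

/-- The extension `F` of `L̄` to `ℝ × ℝ` obtained by successive reflections:
`F(s,λ) = L̄(s-n,λ)` on `(n,n+1]` for even `n ∈ ℕ`, `F(s,λ) = L̄(1-s+n,λ)` on `(n,n+1]`
for odd `n ∈ ℕ`, `F(s,λ) = L̄(-s-n,λ)` on `(-n-1,-n]` for even `n ∈ ℕ` and
`F(s,λ) = L̄(s+n+1,λ)` on `(-n-1,-n]` for odd `n ∈ ℕ`; equivalently,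
`F(s,λ) = L̄(dist(s, 2ℤ), λ)`. -/
def Fext (H : ℝ → ℝ → ℝ) (c : ℝ) (s lam : ℝ) : ℝ :=
  Lbar H c |s - 2 * (round (s / 2) : ℝ)| lam

/-! #### Viscosity solutions on `Q = (0,1) × (0,+∞)` -/

/-- `Q = (0,1) × (0,+∞)`, first coordinate the state `s`, second the time `t`. -/
def Qset : Set (ℝ × ℝ) := Ioo 0 1 ×ˢ Ioi 0

/-- `∂Q = ([0,1] × {0}) ∪ ({0,1} × [0,+∞))`. -/
def bdQ : Set (ℝ × ℝ) := (Icc 0 1 ×ˢ {0}) ∪ (({0, 1} : Set ℝ) ×ˢ Ici 0)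

/-- `∂⁻Q = ([0,1] × {0}) ∪ ({0} × [0,+∞))`. -/
def bdQminus : Set (ℝ × ℝ) := (Icc 0 1 ×ˢ {0}) ∪ (({0} : Set ℝ) ×ˢ Ici 0)

/-- Viscosity subsolution of `U_t + H(s,U') = 0` in `Q`. -/
def IsViscSubsol (H : ℝ → ℝ → ℝ) (U : ℝ → ℝ → ℝ) : Prop :=
  ∀ Φ : ℝ → ℝ → ℝ, ContDiff ℝ 1 (fun p : ℝ × ℝ => Φ p.1 p.2) →
    ∀ p : ℝ × ℝ, p ∈ Qset →
      IsLocalMaxOn (fun q : ℝ × ℝ => U q.1 q.2 - Φ q.1 q.2) Qset p →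
      deriv (fun t => Φ p.1 t) p.2 + H p.1 (deriv (fun s => Φ s p.2) p.1) ≤ 0

/-- Viscosity supersolution of `U_t + H(s,U') = 0` in `Q`. -/
def IsViscSupersol (H : ℝ → ℝ → ℝ) (U : ℝ → ℝ → ℝ) : Prop :=
  ∀ Φ : ℝ → ℝ → ℝ, ContDiff ℝ 1 (fun p : ℝ × ℝ => Φ p.1 p.2) →
    ∀ p : ℝ × ℝ, p ∈ Qset →
      IsLocalMinOn (fun q : ℝ × ℝ => U q.1 q.2 - Φ q.1 q.2) Qset p →
      0 ≤ deriv (fun t => Φ p.1 t) p.2 + H p.1 (deriv (fun s => Φ s p.2) p.1)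

/-- The Lax–Oleinik value function associated to a boundary datum `g` on `∂Q`:
`V(s,t) = inf { g(s₀,t₀) + ∫_{t₀}^t L(η,η̇) dτ }`, the infimum being over points
`(s₀,t₀) ∈ ∂Q` with `t₀ ≤ t` (where `t₀ = t` is only allowed for the trivial curve) and over
absolutely continuous curves `η : [t₀,t] → [0,1]` with `η(t₀) = s₀`, `η(t) = s`. -/
def valOn (B : Set (ℝ × ℝ)) (H : ℝ → ℝ → ℝ) (g : ℝ → ℝ → ℝ) (s t : ℝ) : ℝ :=
  sInf {v : ℝ | ∃ s₀ t₀ : ℝ, (s₀, t₀) ∈ B ∧ (t₀ < t ∨ (t₀ = t ∧ s₀ = s)) ∧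
    ∃ η η' : ℝ → ℝ, IsACDerivOn t₀ t η η' ∧ (∀ τ ∈ Icc t₀ t, η τ ∈ Icc (0:ℝ) 1) ∧
      η t₀ = s₀ ∧ η t = s ∧
      (v : EReal) = ((g s₀ t₀ : ℝ) : EReal) +
        eIntegral t₀ t fun τ => ((Lagr H (η τ) (η' τ) : ℝ) : EReal)}

/-- Value function for the boundary datum on `∂Q`. -/
def valV (H : ℝ → ℝ → ℝ) (g : ℝ → ℝ → ℝ) : ℝ → ℝ → ℝ := valOn bdQ H g

/-- Value function for the boundary datum on `∂⁻Q`. -/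
def valW (H : ℝ → ℝ → ℝ) (g : ℝ → ℝ → ℝ) : ℝ → ℝ → ℝ := valOn bdQminus H g

/-! #### Embedded networks in `ℝ^N` -/

/-- Euclidean space `ℝ^N`. -/
abbrev EucN (N : ℕ) := EuclideanSpace ℝ (Fin N)

/-- A regular simple arc in `ℝ^N`, parametrized on `[0,1]`: a `C¹` injective curve with
nowhere vanishing (one-sided at the endpoints) derivative. -/
structure Arc (N : ℕ) where
  toFun : ℝ → EucN N
  deriv : ℝ → EucN N
  hasDeriv : ∀ s ∈ Icc (0:ℝ) 1, HasDerivWithinAt toFun (deriv s) (Icc 0 1) s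
  contDeriv : ContinuousOn deriv (Icc 0 1)
  deriv_ne_zero : ∀ s ∈ Icc (0:ℝ) 1, deriv s ≠ 0
  injOn : InjOn toFun (Icc 0 1)

/-- `γ'` is the inverse parametrization of `γ`: `γ'(s) = γ(1-s)` on `[0,1]`. -/
def Arc.IsInverse {N : ℕ} (γ γ' : Arc N) : Prop :=
  ∀ s ∈ Icc (0:ℝ) 1, γ'.toFun s = γ.toFun (1 - s)

/-- An embedded network in `ℝ^N`: a finite, connected collection of arcs, closed under
inverse parametrization, such that two arcs which are not inverse to each other meet only at
endpoints, vertices (endpoints of arcs) never lie in the interior of an arc, and no arc is a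
loop (this is subsumed by injectivity of the arcs on `[0,1]`). -/
structure EmbNetwork (N : ℕ) where
  arcs : Set (Arc N)
  finite : arcs.Finite
  nonempty : arcs.Nonempty
  closed_inv : ∀ γ ∈ arcs, ∃ γ' ∈ arcs, Arc.IsInverse γ γ'
  disj : ∀ γ ∈ arcs, ∀ γ' ∈ arcs, γ ≠ γ' → ¬ Arc.IsInverse γ γ' →
    (γ.toFun '' Ioo 0 1) ∩ (γ'.toFun '' Icc 0 1) = ∅
  no_vertex_inside : ∀ γ ∈ arcs, ∀ γ' ∈ arcs, ∀ s ∈ Ioo (0:ℝ) 1,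
    γ.toFun s ≠ γ'.toFun 0 ∧ γ.toFun s ≠ γ'.toFun 1
  connected : IsConnected (⋃ γ ∈ arcs, γ.toFun '' Icc 0 1)

namespace EmbNetwork

variable {N : ℕ}

/-- The support `Γ ⊆ ℝ^N` of the network. -/
def carrier (Γ : EmbNetwork N) : Set (EucN N) := ⋃ γ ∈ Γ.arcs, γ.toFun '' Icc 0 1

/-- The set `V` of vertices of the network. -/
def V (Γ : EmbNetwork N) : Set (EucN N) :=
  {x | ∃ γ ∈ Γ.arcs, γ.toFun 0 = x ∨ γ.toFun 1 = x}

/-- The geodesic distance on `Γ` induced by the Euclidean metric: the infimum of the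
euclidean lengths of absolutely continuous curves joining `x` to `y` within `Γ`. -/
def geoDist (Γ : EmbNetwork N) (x y : EucN N) : ℝ :=
  sInf {l : ℝ | ∃ ξ ξ' : ℝ → EucN N, IsACDerivOn 0 1 ξ ξ' ∧
    (∀ t ∈ Icc (0:ℝ) 1, ξ t ∈ Γ.carrier) ∧ ξ 0 = x ∧ ξ 1 = y ∧
    l = ∫ τ in Icc (0:ℝ) 1, ‖ξ' τ‖}

end EmbNetwork

/-! #### Hamiltonians, flux limiters and the Lagrangian on a network -/

/-- A Hamiltonian on the network `Γ`: a family of Hamiltonians indexed by the arcs, each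
satisfying the standing assumptions, with the compatibility condition
`H_{γ̃}(s,μ) = H_γ(1-s,-μ)` for inverse arcs. -/
structure IsNetworkHamiltonian {N : ℕ} (Γ : EmbNetwork N) (H : Arc N → ℝ → ℝ → ℝ) : Prop where
  isHam : ∀ γ ∈ Γ.arcs, IsHamiltonian (H γ)
  compat : ∀ γ ∈ Γ.arcs, ∀ γ' ∈ Γ.arcs, Arc.IsInverse γ γ' →
    ∀ s ∈ Icc (0:ℝ) 1, ∀ μ : ℝ, H γ' s μ = H γ (1 - s) (-μ)

/-- A flux limiter: constants `c x` for the vertices with `c x ≤ min_{γ ∈ Γ_x} c_γ`. -/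
def IsFluxLimiter {N : ℕ} (Γ : EmbNetwork N) (H : Arc N → ℝ → ℝ → ℝ)
    (c : EucN N → ℝ) : Prop :=
  ∀ x ∈ Γ.V, ∀ γ ∈ Γ.arcs, γ.toFun 1 = x → c x ≤ cHam (H γ)

/-- The Lagrangian `L : ℝ^N × ℝ^N → ℝ ∪ {+∞}` of the network, associated to the Hamiltonian
`H` and the flux limiter `c`:  `L(x,q) = L_γ(γ⁻¹(x), (q·γ̇)/|γ̇|²)` if `x ∈ γ((0,1))` and `q`
is parallel to `γ̇(γ⁻¹ x)`; at a vertex `x`, `L(x,0) = c x`, and for `q ≠ 0` tangent,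
`L(x,q) = min L_γ(1, (q·γ̇(1))/|γ̇(1)|²)`, the minimum over arcs `γ ∈ Γ_x` with `q` parallel
to `γ̇(1)`; `L(x,q) = +∞` if `(x,q) ∉ TΓ`. -/
def eLag {N : ℕ} (Γ : EmbNetwork N) (H : Arc N → ℝ → ℝ → ℝ) (c : EucN N → ℝ)
    (x q : EucN N) : EReal :=
  if x ∈ Γ.V then
    if q = 0 then ((c x : ℝ) : EReal)
    else if ∃ γ ∈ Γ.arcs, γ.toFun 1 = x ∧ ∃ lam : ℝ, q = lam • γ.deriv 1 then
      ((sInf {v : ℝ | ∃ γ ∈ Γ.arcs, γ.toFun 1 = x ∧ (∃ lam : ℝ, q = lam • γ.deriv 1) ∧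
        v = Lagr (H γ) 1 ((inner ℝ q (γ.deriv 1) : ℝ) / ‖γ.deriv 1‖ ^ 2)} : ℝ) : EReal)
    else ⊤
  else
    if ∃ γ ∈ Γ.arcs, ∃ s ∈ Ioo (0:ℝ) 1, γ.toFun s = x ∧ ∃ lam : ℝ, q = lam • γ.deriv s then
      ((sInf {v : ℝ | ∃ γ ∈ Γ.arcs, ∃ s ∈ Ioo (0:ℝ) 1, γ.toFun s = x ∧
        (∃ lam : ℝ, q = lam • γ.deriv s) ∧
        v = Lagr (H γ) s ((inner ℝ q (γ.deriv s) : ℝ) / ‖γ.deriv s‖ ^ 2)} : ℝ) : EReal)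
    else ⊤

/-- The (extended-real valued) action `∫_a^b L(ξ,ξ̇) dτ` of a curve. -/
def eAction {N : ℕ} (Γ : EmbNetwork N) (H : Arc N → ℝ → ℝ → ℝ) (c : EucN N → ℝ)
    (a b : ℝ) (ξ ξ' : ℝ → EucN N) : EReal :=
  eIntegral a b fun τ => eLag Γ H c (ξ τ) (ξ' τ)

/-- A curve `ξ : [a,b] → Γ` is admissible if there is a finite partition
`a = t₁ < t₂ < ⋯ < t_m = b` whose interior points are mapped to vertices, such that on each
open subinterval either the curve avoids the vertices and has distinct endpoints, or it is
constantly equal to a vertex. -/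
def Admissible {N : ℕ} (Γ : EmbNetwork N) (a b : ℝ) (ξ : ℝ → EucN N) : Prop :=
  ∃ (n : ℕ) (t : ℕ → ℝ), t 0 = a ∧ t n = b ∧ (∀ i, i < n → t i < t (i + 1)) ∧
    (∀ i, 0 < i → i < n → ξ (t i) ∈ Γ.V) ∧
    ∀ i, i < n →
      ((∀ τ ∈ Ioo (t i) (t (i + 1)), ξ τ ∉ Γ.V) ∧ ξ (t i) ≠ ξ (t (i + 1))) ∨
      ∃ x ∈ Γ.V, ∀ τ ∈ Ioo (t i) (t (i + 1)), ξ τ = x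

/-- The minimal action functional `S(x,t,y,r)`: the infimum of the actions
`∫_0^{r-t} L(ξ,ξ̇) dτ` over absolutely continuous curves `ξ : [0,r-t] → ℝ^N` with
`ξ(0) = x`, `ξ(r-t) = y`. -/
def minAction {N : ℕ} (Γ : EmbNetwork N) (H : Arc N → ℝ → ℝ → ℝ) (c : EucN N → ℝ)
    (x : EucN N) (t : ℝ) (y : EucN N) (r : ℝ) : ℝ :=
  sInf {v : ℝ | ∃ ξ ξ' : ℝ → EucN N, IsACDerivOn 0 (r - t) ξ ξ' ∧
    ξ 0 = x ∧ ξ (r - t) = y ∧ (v : EReal) = eAction Γ H c 0 (r - t) ξ ξ'}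

/-- The Lax–Oleinik formula on the network:
`u(x,t) = inf { ∫_0^t L(ξ,ξ̇) dτ + u₀(ξ(0)) }`, the infimum over absolutely continuous
curves `ξ : [0,t] → Γ` with `ξ(t) = x`. -/
def laxOleinik {N : ℕ} (Γ : EmbNetwork N) (H : Arc N → ℝ → ℝ → ℝ) (c : EucN N → ℝ)
    (u₀ : EucN N → ℝ) (x : EucN N) (t : ℝ) : ℝ :=
  sInf {v : ℝ | ∃ ξ ξ' : ℝ → EucN N, IsACDerivOn 0 t ξ ξ' ∧
    (∀ τ ∈ Icc 0 t, ξ τ ∈ Γ.carrier) ∧ ξ t = x ∧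
    (v : EReal) = ((u₀ (ξ 0) : ℝ) : EReal) + eAction Γ H c 0 t ξ ξ'}

/-! #### Sub- and supersolutions of the time-dependent problem on the network -/

/-- Subsolution of (HJΓ): for every arc, `v ∘ γ` is a viscosity subsolution on `Q`, and at
every vertex `x` and `t₀ > 0`, every `C¹` supertangent `ψ` to `v(x,·)` at `t₀` satisfies
`ψ'(t₀) ≤ c x`. -/
def IsNetSubsol {N : ℕ} (Γ : EmbNetwork N) (H : Arc N → ℝ → ℝ → ℝ) (c : EucN N → ℝ)
    (v : EucN N → ℝ → ℝ) : Prop :=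
  (∀ γ ∈ Γ.arcs, IsViscSubsol (H γ) fun s t => v (γ.toFun s) t) ∧
  ∀ x ∈ Γ.V, ∀ t₀ : ℝ, 0 < t₀ → ∀ ψ : ℝ → ℝ, ContDiff ℝ 1 ψ →
    IsLocalMax (fun t => v x t - ψ t) t₀ → deriv ψ t₀ ≤ c x

/-- Supersolution of (HJΓ): for every arc, `v ∘ γ` is a viscosity supersolution on `Q`, and
at every vertex `x` and `t₀ > 0`, if some `C¹` subtangent `φ` to `v(x,·)` at `t₀` has
`φ'(t₀) < c x`, then there is an arc `γ ∈ Γ_x` such that every `C¹` subtangent `Φ` to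
`v ∘ γ` at `(1,t₀)`, constrained to the closure of `Q`, satisfies
`Φ_t(1,t₀) + H_γ(1,Φ'(1,t₀)) ≥ 0`. -/
def IsNetSupersol {N : ℕ} (Γ : EmbNetwork N) (H : Arc N → ℝ → ℝ → ℝ) (c : EucN N → ℝ)
    (v : EucN N → ℝ → ℝ) : Prop :=
  (∀ γ ∈ Γ.arcs, IsViscSupersol (H γ) fun s t => v (γ.toFun s) t) ∧
  ∀ x ∈ Γ.V, ∀ t₀ : ℝ, 0 < t₀ → ∀ φ : ℝ → ℝ, ContDiff ℝ 1 φ →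
    IsLocalMin (fun t => v x t - φ t) t₀ → deriv φ t₀ < c x →
    ∃ γ ∈ Γ.arcs, γ.toFun 1 = x ∧
      ∀ Φ : ℝ → ℝ → ℝ, ContDiff ℝ 1 (fun p : ℝ × ℝ => Φ p.1 p.2) →
        IsLocalMinOn (fun p : ℝ × ℝ => v (γ.toFun p.1) p.2 - Φ p.1 p.2)
          (Icc 0 1 ×ˢ Ici 0) (1, t₀) →
        0 ≤ deriv (fun t => Φ 1 t) t₀ + H γ 1 (deriv (fun s => Φ s t₀) 1)

end

/-!
For every real `r`, the sublevel set `{L ≤ r}` is a finite union of closed sets: the points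
`(x, 0)` with `x` a vertex and `c x ≤ r`, and, for each arc `γ`, the image of
`{(s, λ) ∈ [0,1] × ℝ | L_γ(s, λ) ≤ r}` under `(s, λ) ↦ (γ(s), λ γ̇(s))`. Such an image is closed
because `L_γ`, a supremum of continuous functions, is lower semicontinuous and `s` ranges over
the compact `[0,1]`. The union exhausts `{L ≤ r}` and no more, since at a vertex
`c_x ≤ c_γ ≤ L_γ(1, 0)` and an arc starting at `x` is the inverse of an arc ending at `x`.
-/

theorem lowerSemicontinuous_of_isClosed_preimage_Iic_coe {α : Type*} [TopologicalSpace α]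
    {f : α → EReal} (h : ∀ r : ℝ, IsClosed (f ⁻¹' Iic (r : EReal))) :
    LowerSemicontinuous f := by
  intro x y hy
  obtain ⟨r, hyr, hrx⟩ := EReal.lt_iff_exists_real_btwn.mp hy
  filter_upwards [(h r).isOpen_compl.mem_nhds (not_le.mpr hrx)] with z hz
  exact hyr.trans (not_le.mp hz)

theorem real_inner_smul_self_div_norm_sq {E : Type*} [NormedAddCommGroup E]
    [InnerProductSpace ℝ E] {d : E} (hd : d ≠ 0) (lam : ℝ) :
    inner ℝ (lam • d) d / ‖d‖ ^ 2 = lam := by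
  rw [real_inner_smul_left, real_inner_self_eq_norm_sq]
  exact mul_div_cancel_right₀ lam (pow_ne_zero 2 (norm_ne_zero_iff.mpr hd))

namespace IsHamiltonian

variable {H : ℝ → ℝ → ℝ}

theorem exists_mul_abs_sub_le (hH : IsHamiltonian H) (A : ℝ) :
    ∃ C : ℝ, ∀ s ∈ Icc (0:ℝ) 1, ∀ μ : ℝ, A * |μ| - C ≤ H s μ := by
  obtain ⟨R, hR⟩ := hH.superlinear A
  have hK : IsCompact (Icc (0:ℝ) 1 ×ˢ Icc (-|R|) |R|) := isCompact_Icc.prod isCompact_Icc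
  obtain ⟨m, hm⟩ := hK.bddBelow_image (hH.cont.mono fun p hp => ⟨hp.1, mem_univ _⟩)
  refine ⟨max 0 (|A| * |R| - m), fun s hs μ => ?_⟩
  rcases le_or_gt |μ| |R| with hμ | hμ
  · have hHm : m ≤ H s μ := hm ⟨(s, μ), ⟨hs, abs_le.mp hμ⟩, rfl⟩
    have hAμ : A * |μ| ≤ |A| * |R| := calc
      A * |μ| ≤ |A| * |μ| := by simpa [abs_mul] using le_abs_self (A * |μ|)
      _ ≤ |A| * |R| := by gcongr
    linarith [le_max_right 0 (|A| * |R| - m)]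
  · linarith [hR s hs μ ((le_abs_self R).trans hμ.le), le_max_left 0 (|A| * |R| - m)]

theorem bddAbove_range_lagr (hH : IsHamiltonian H) {s : ℝ} (hs : s ∈ Icc (0:ℝ) 1) (lam : ℝ) :
    BddAbove (range fun μ => lam * μ - H s μ) := by
  obtain ⟨C, hC⟩ := hH.exists_mul_abs_sub_le |lam|
  refine ⟨C, ?_⟩
  rintro _ ⟨μ, rfl⟩
  have hlam : lam * μ ≤ |lam| * |μ| := (le_abs_self _).trans (abs_mul _ _).le
  linarith [hC s hs μ]

theorem le_lagr (hH : IsHamiltonian H) {s : ℝ} (hs : s ∈ Icc (0:ℝ) 1) (lam μ : ℝ) :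
    lam * μ - H s μ ≤ Lagr H s lam :=
  le_csSup (hH.bddAbove_range_lagr hs lam) ⟨μ, rfl⟩

theorem cHam_le_lagr_zero (hH : IsHamiltonian H) {s : ℝ} (hs : s ∈ Icc (0:ℝ) 1) :
    cHam H ≤ Lagr H s 0 := by
  obtain ⟨C, hC⟩ := hH.exists_mul_abs_sub_le 0
  obtain ⟨M, hM⟩ := isCompact_Icc.bddAbove_image (hH.cont.comp
    (continuous_id.prodMk continuous_const).continuousOn fun σ hσ => ⟨hσ, mem_univ _⟩ :
      ContinuousOn (fun σ => H σ 0) (Icc 0 1))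
  have hbdd : BddAbove ((fun σ => sInf (range fun μ => H σ μ)) '' Icc 0 1) := by
    refine ⟨M, ?_⟩
    rintro _ ⟨σ, hσ, rfl⟩
    have hbdd_below : BddBelow (range fun μ => H σ μ) :=
      ⟨-C, by rintro _ ⟨μ, rfl⟩; simpa using hC σ hσ μ⟩
    exact (csInf_le hbdd_below ⟨0, rfl⟩).trans (hM ⟨σ, hσ, rfl⟩)
  have hinf : -Lagr H s 0 ≤ sInf (range fun μ => H s μ) :=
    le_csInf (range_nonempty _) (by rintro _ ⟨μ, rfl⟩; linarith [hH.le_lagr hs 0 μ])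
  have hsup := le_csSup hbdd ⟨s, hs, rfl⟩
  unfold cHam
  linarith

theorem lowerSemicontinuous_lagr (hH : IsHamiltonian H) :
    LowerSemicontinuous fun p : Icc (0:ℝ) 1 × ℝ => Lagr H p.1 p.2 :=
  lowerSemicontinuous_ciSup (fun p => hH.bddAbove_range_lagr p.1.2 p.2) fun μ =>
    ((continuous_snd.mul continuous_const).sub
      (hH.cont.comp_continuous (f := fun p : Icc (0:ℝ) 1 × ℝ => ((p.1 : ℝ), μ))
        (by fun_prop) fun p => ⟨p.1.2, mem_univ _⟩)).lowerSemicontinuous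

end IsHamiltonian

namespace Arc

variable {N : ℕ}

theorem continuousOn_toFun (γ : Arc N) : ContinuousOn γ.toFun (Icc 0 1) :=
  fun s hs => (γ.hasDeriv s hs).continuousWithinAt

theorem IsInverse.deriv_eq {γ γ' : Arc N} (h : γ.IsInverse γ') {σ : ℝ}
    (hσ : σ ∈ Icc (0:ℝ) 1) : γ'.deriv σ = -γ.deriv (1 - σ) := by
  have h1σ : 1 - σ ∈ Icc (0:ℝ) 1 := ⟨by linarith [hσ.2], by linarith [hσ.1]⟩
  have hreflect : HasDerivWithinAt (fun t : ℝ => 1 - t) (-1 : ℝ) (Icc 0 1) σ := by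
    simpa using (hasDerivWithinAt_id σ (Icc (0:ℝ) 1)).const_sub 1
  have hmaps : MapsTo (fun t : ℝ => 1 - t) (Icc (0:ℝ) 1) (Icc (0:ℝ) 1) :=
    fun t ht => ⟨by linarith [ht.2], by linarith [ht.1]⟩
  have hγ' : HasDerivWithinAt γ'.toFun ((-1 : ℝ) • γ.deriv (1 - σ)) (Icc 0 1) σ :=
    ((γ.hasDeriv (1 - σ) h1σ).scomp σ hreflect hmaps).congr h (h σ hσ)
  have hu : UniqueDiffWithinAt ℝ (Icc (0:ℝ) 1) σ := uniqueDiffOn_Icc one_pos σ hσ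
  rw [← (γ'.hasDeriv σ hσ).derivWithin hu, hγ'.derivWithin hu, neg_one_smul]

theorem isClosed_image_smul_deriv (γ : Arc N) {f : Icc (0:ℝ) 1 × ℝ → ℝ}
    (hf : LowerSemicontinuous f) (r : ℝ) :
    IsClosed ((fun p : Icc (0:ℝ) 1 × ℝ => (γ.toFun p.1, p.2 • γ.deriv p.1)) ''
      {p | f p ≤ r}) := by
  have hγ : Continuous fun s : Icc (0:ℝ) 1 => γ.toFun s := γ.continuousOn_toFun.domRestrict
  have hd : Continuous fun s : Icc (0:ℝ) 1 => γ.deriv s := γ.contDeriv.domRestrict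
  have hd0 : ∀ s : Icc (0:ℝ) 1, γ.deriv s ≠ 0 := fun s => γ.deriv_ne_zero s s.2
  set coord : Icc (0:ℝ) 1 × EucN N → ℝ :=
    fun z => inner ℝ z.2 (γ.deriv z.1) / ‖γ.deriv z.1‖ ^ 2
  have hcoord : Continuous coord :=
    (continuous_snd.inner (hd.comp continuous_fst)).div ((hd.comp continuous_fst).norm.pow 2)
      fun z => pow_ne_zero 2 (norm_ne_zero_iff.mpr (hd0 z.1))
  -- `s` is compact, so it can be projected away; `λ` is recovered continuously from `q`.
  have hC : IsClosed {z : Icc (0:ℝ) 1 × (EucN N × EucN N) | z.2.1 = γ.toFun z.1 ∧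
      z.2.2 = coord (z.1, z.2.2) • γ.deriv z.1 ∧ f (z.1, coord (z.1, z.2.2)) ≤ r} := by
    have hz : Continuous fun z : Icc (0:ℝ) 1 × (EucN N × EucN N) => coord (z.1, z.2.2) :=
      hcoord.comp (by fun_prop)
    refine (isClosed_eq (by fun_prop) (hγ.comp continuous_fst)).inter
      ((isClosed_eq (by fun_prop) (hz.smul (hd.comp continuous_fst))).inter ?_)
    exact (hf.isClosed_preimage r).preimage (continuous_fst.prodMk hz)
  convert isClosedMap_snd_of_compactSpace _ hC using 1
  ext ⟨x, q⟩
  constructor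
  · rintro ⟨⟨s, lam⟩, hle, hxq⟩
    obtain ⟨rfl, rfl⟩ := Prod.ext_iff.mp hxq
    have hlam : coord (s, lam • γ.deriv s) = lam := real_inner_smul_self_div_norm_sq (hd0 s) lam
    exact ⟨(s, _, _), ⟨rfl, by rw [hlam], by rwa [hlam]⟩, rfl⟩
  · rintro ⟨⟨s, x', q'⟩, ⟨hx, hq, hle⟩, hxq⟩
    obtain ⟨rfl, rfl⟩ := Prod.ext_iff.mp hxq
    exact ⟨(s, coord (s, q')), hle, Prod.ext hx.symm hq.symm⟩

end Arc

theorem IsNetworkHamiltonian.lagr_of_isInverse {N : ℕ} {Γ : EmbNetwork N}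
    {H : Arc N → ℝ → ℝ → ℝ} (hH : IsNetworkHamiltonian Γ H) {γ γ' : Arc N} (hγ : γ ∈ Γ.arcs)
    (hγ' : γ' ∈ Γ.arcs) (h : γ.IsInverse γ') {σ : ℝ} (hσ : σ ∈ Icc (0:ℝ) 1) (κ : ℝ) :
    Lagr (H γ') σ κ = Lagr (H γ) (1 - σ) (-κ) := by
  have hcomp : (fun μ => κ * μ - H γ' σ μ) = (fun μ => -κ * μ - H γ (1 - σ) μ) ∘ Neg.neg := by
    funext μ
    rw [Function.comp_apply, hH.compat γ hγ γ' hγ' h σ hσ]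
    ring
  rw [Lagr, Lagr, hcomp, neg_surjective.range_comp]

namespace EmbNetwork

variable {N : ℕ} (Γ : EmbNetwork N)

theorem finite_V : Γ.V.Finite :=
  (Γ.finite.biUnion fun γ _ => (finite_singleton (γ.toFun 1)).insert (γ.toFun 0)).subset
    fun _ ⟨γ, hγ, h⟩ => mem_biUnion hγ (by rcases h with rfl | rfl <;> simp)

theorem finite_setOf_exists_arc {P : Arc N → ℝ → Prop}
    (hP : ∀ γ ∈ Γ.arcs, {v | P γ v}.Subsingleton) : {v : ℝ | ∃ γ ∈ Γ.arcs, P γ v}.Finite :=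
  (Γ.finite.biUnion fun γ hγ => (hP γ hγ).finite).subset fun _ ⟨_, hγ, hv⟩ => mem_biUnion hγ hv

end EmbNetwork

section Lagrangian

variable {N : ℕ} {Γ : EmbNetwork N} {H : Arc N → ℝ → ℝ → ℝ} {c : EucN N → ℝ}
  {x q : EucN N} {γ : Arc N}

theorem finite_vertexValues (Γ : EmbNetwork N) (H : Arc N → ℝ → ℝ → ℝ) (x q : EucN N) :
    {v : ℝ | ∃ γ ∈ Γ.arcs, γ.toFun 1 = x ∧ (∃ lam : ℝ, q = lam • γ.deriv 1) ∧
      v = Lagr (H γ) 1 ((inner ℝ q (γ.deriv 1) : ℝ) / ‖γ.deriv 1‖ ^ 2)}.Finite :=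
  Γ.finite_setOf_exists_arc fun _ _ _ hv _ hw => hv.2.2.trans hw.2.2.symm

theorem finite_interiorValues (Γ : EmbNetwork N) (H : Arc N → ℝ → ℝ → ℝ) (x q : EucN N) :
    {v : ℝ | ∃ γ ∈ Γ.arcs, ∃ s ∈ Ioo (0:ℝ) 1, γ.toFun s = x ∧
      (∃ lam : ℝ, q = lam • γ.deriv s) ∧
      v = Lagr (H γ) s ((inner ℝ q (γ.deriv s) : ℝ) / ‖γ.deriv s‖ ^ 2)}.Finite := by
  refine Γ.finite_setOf_exists_arc fun γ _ => ?_
  rintro _ ⟨s, hs, hsx, -, rfl⟩ _ ⟨s', hs', hs'x, -, rfl⟩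
  rw [γ.injOn (Ioo_subset_Icc_self hs) (Ioo_subset_Icc_self hs') (hsx.trans hs'x.symm)]

theorem eLag_of_mem_V_zero (hx : x ∈ Γ.V) : eLag Γ H c x 0 = c x := by
  rw [eLag, if_pos hx, if_pos rfl]

theorem eLag_le_of_toFun_one_of_ne_zero (hx : x ∈ Γ.V) (hq : q ≠ 0) (hγ : γ ∈ Γ.arcs)
    (hγx : γ.toFun 1 = x) {lam : ℝ} (hlam : q = lam • γ.deriv 1) :
    eLag Γ H c x q ≤ Lagr (H γ) 1 lam := by
  rw [eLag, if_pos hx, if_neg hq, if_pos ⟨γ, hγ, hγx, lam, hlam⟩]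
  refine EReal.coe_le_coe_iff.mpr (csInf_le (finite_vertexValues Γ H x q).bddBelow
    ⟨γ, hγ, hγx, ⟨lam, hlam⟩, ?_⟩)
  rw [hlam, real_inner_smul_self_div_norm_sq (γ.deriv_ne_zero 1 ⟨zero_le_one, le_rfl⟩)]

theorem eLag_le_of_notMem_V (hx : x ∉ Γ.V) (hγ : γ ∈ Γ.arcs) {s : ℝ} (hs : s ∈ Ioo (0:ℝ) 1)
    (hsx : γ.toFun s = x) {lam : ℝ} (hlam : q = lam • γ.deriv s) :
    eLag Γ H c x q ≤ Lagr (H γ) s lam := by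
  rw [eLag, if_neg hx, if_pos ⟨γ, hγ, s, hs, hsx, lam, hlam⟩]
  refine EReal.coe_le_coe_iff.mpr (csInf_le (finite_interiorValues Γ H x q).bddBelow
    ⟨γ, hγ, s, hs, hsx, ⟨lam, hlam⟩, ?_⟩)
  rw [hlam, real_inner_smul_self_div_norm_sq (γ.deriv_ne_zero s (Ioo_subset_Icc_self hs))]

theorem eLag_le_of_toFun_one (hH : IsNetworkHamiltonian Γ H) (hc : IsFluxLimiter Γ H c)
    (hγ : γ ∈ Γ.arcs) (hγx : γ.toFun 1 = x) (lam : ℝ) :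
    eLag Γ H c x (lam • γ.deriv 1) ≤ Lagr (H γ) 1 lam := by
  have h1 : (1:ℝ) ∈ Icc (0:ℝ) 1 := ⟨zero_le_one, le_rfl⟩
  have hx : x ∈ Γ.V := ⟨γ, hγ, Or.inr hγx⟩
  rcases eq_or_ne lam 0 with rfl | hlam
  · rw [zero_smul, eLag_of_mem_V_zero hx]
    exact_mod_cast (hc x hx γ hγ hγx).trans ((hH.isHam γ hγ).cHam_le_lagr_zero h1)
  · exact eLag_le_of_toFun_one_of_ne_zero hx (smul_ne_zero hlam (γ.deriv_ne_zero 1 h1)) hγ hγx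
      rfl

theorem eLag_le_of_toFun_zero (hH : IsNetworkHamiltonian Γ H) (hc : IsFluxLimiter Γ H c)
    (hγ : γ ∈ Γ.arcs) (hγx : γ.toFun 0 = x) (lam : ℝ) :
    eLag Γ H c x (lam • γ.deriv 0) ≤ Lagr (H γ) 0 lam := by
  have h1 : (1:ℝ) ∈ Icc (0:ℝ) 1 := ⟨zero_le_one, le_rfl⟩
  obtain ⟨β, hβ, hinv⟩ := Γ.closed_inv γ hγ
  have hβx : β.toFun 1 = x := by rw [hinv 1 h1, sub_self, hγx]
  have hle := eLag_le_of_toFun_one hH hc hβ hβx (-lam)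
  rwa [hinv.deriv_eq h1, sub_self, smul_neg, neg_smul, neg_neg,
    hH.lagr_of_isInverse hγ hβ hinv h1, sub_self, neg_neg] at hle

theorem eLag_le_of_arc (hH : IsNetworkHamiltonian Γ H) (hc : IsFluxLimiter Γ H c)
    (hγ : γ ∈ Γ.arcs) {s : ℝ} (hs : s ∈ Icc (0:ℝ) 1) (hsx : γ.toFun s = x) (lam : ℝ) :
    eLag Γ H c x (lam • γ.deriv s) ≤ Lagr (H γ) s lam := by
  by_cases hx : x ∈ Γ.V
  · have hs01 : s = 0 ∨ s = 1 := by
      by_contra! hs01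
      obtain ⟨γ', hγ', hγ'x⟩ := hx
      have hinside := Γ.no_vertex_inside γ hγ γ' hγ' s
        ⟨hs.1.lt_of_ne hs01.1.symm, hs.2.lt_of_ne hs01.2⟩
      rcases hγ'x with h | h
      exacts [hinside.1 (hsx.trans h.symm), hinside.2 (hsx.trans h.symm)]
    rcases hs01 with rfl | rfl
    exacts [eLag_le_of_toFun_zero hH hc hγ hsx lam, eLag_le_of_toFun_one hH hc hγ hsx lam]
  · have hs0 : s ≠ 0 := by rintro rfl; exact hx ⟨γ, hγ, Or.inl hsx⟩
    have hs1 : s ≠ 1 := by rintro rfl; exact hx ⟨γ, hγ, Or.inr hsx⟩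
    exact eLag_le_of_notMem_V hx hγ ⟨hs.1.lt_of_ne hs0.symm, hs.2.lt_of_ne hs1⟩ hsx rfl

theorem exists_of_eLag_le {r : ℝ} (h : eLag Γ H c x q ≤ r) :
    (x ∈ Γ.V ∧ q = 0 ∧ c x ≤ r) ∨ ∃ γ ∈ Γ.arcs, ∃ s ∈ Icc (0:ℝ) 1, ∃ lam : ℝ,
      γ.toFun s = x ∧ q = lam • γ.deriv s ∧ Lagr (H γ) s lam ≤ r := by
  unfold eLag at h
  split_ifs at h with hx hq hvertex hinterior
  · exact Or.inl ⟨hx, hq, EReal.coe_le_coe_iff.mp h⟩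
  · obtain ⟨γ₀, hγ₀, hγ₀x, hlam₀⟩ := hvertex
    obtain ⟨γ, hγ, hγx, ⟨lam, rfl⟩, hv⟩ :=
      Set.Nonempty.csInf_mem (by exact ⟨_, γ₀, hγ₀, hγ₀x, hlam₀, rfl⟩)
        (finite_vertexValues Γ H x q)
    rw [hv, real_inner_smul_self_div_norm_sq (γ.deriv_ne_zero 1 ⟨zero_le_one, le_rfl⟩)] at h
    exact Or.inr ⟨γ, hγ, 1, ⟨zero_le_one, le_rfl⟩, lam, hγx, rfl, EReal.coe_le_coe_iff.mp h⟩
  · exact absurd h (by simp)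
  · obtain ⟨γ₀, hγ₀, s₀, hs₀, hs₀x, hlam₀⟩ := hinterior
    obtain ⟨γ, hγ, s, hs, hsx, ⟨lam, rfl⟩, hv⟩ :=
      Set.Nonempty.csInf_mem (by exact ⟨_, γ₀, hγ₀, s₀, hs₀, hs₀x, hlam₀, rfl⟩)
        (finite_interiorValues Γ H x q)
    rw [hv, real_inner_smul_self_div_norm_sq (γ.deriv_ne_zero s (Ioo_subset_Icc_self hs))] at h
    exact Or.inr ⟨γ, hγ, s, Ioo_subset_Icc_self hs, lam, hsx, rfl, EReal.coe_le_coe_iff.mp h⟩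
  · exact absurd h (by simp)

theorem preimage_Iic_eLag (hH : IsNetworkHamiltonian Γ H) (hc : IsFluxLimiter Γ H c) (r : ℝ) :
    (fun p : EucN N × EucN N => eLag Γ H c p.1 p.2) ⁻¹' Iic (r : EReal) =
      ({x | x ∈ Γ.V ∧ c x ≤ r} ×ˢ {0}) ∪ ⋃ γ ∈ Γ.arcs,
        (fun p : Icc (0:ℝ) 1 × ℝ => (γ.toFun p.1, p.2 • γ.deriv p.1)) ''
          {p | Lagr (H γ) p.1 p.2 ≤ r} := by
  ext ⟨x, q⟩
  constructor
  · intro h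
    rcases exists_of_eLag_le h with ⟨hx, rfl, hcx⟩ | ⟨γ, hγ, s, hs, lam, rfl, rfl, hle⟩
    · exact Or.inl ⟨⟨hx, hcx⟩, rfl⟩
    · exact Or.inr (mem_biUnion hγ ⟨(⟨s, hs⟩, lam), hle, rfl⟩)
  · rintro (⟨⟨hx, hcx⟩, rfl⟩ | h)
    · show eLag Γ H c x 0 ≤ r
      rw [eLag_of_mem_V_zero hx]
      exact EReal.coe_le_coe_iff.mpr hcx
    · obtain ⟨γ, hγ, ⟨⟨s, hs⟩, lam⟩, hle, hxq⟩ := mem_iUnion₂.mp h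
      obtain ⟨rfl, rfl⟩ := Prod.ext_iff.mp hxq
      exact (eLag_le_of_arc hH hc hγ hs rfl lam).trans (EReal.coe_le_coe_iff.mpr hle)

end Lagrangian

/-- The Lagrangian `L : ℝ^N × ℝ^N → ℝ ∪ {+∞}` on the network associated to
the Hamiltonian `H` and the flux limiter `c` is lower semicontinuous. -/
theorem stmt6 {N : ℕ} (Γ : EmbNetwork N) (H : Arc N → ℝ → ℝ → ℝ)
    (hH : IsNetworkHamiltonian Γ H) (c : EucN N → ℝ) (hc : IsFluxLimiter Γ H c) :
    LowerSemicontinuous (fun p : EucN N × EucN N => eLag Γ H c p.1 p.2) := by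
  refine lowerSemicontinuous_of_isClosed_preimage_Iic_coe fun r => ?_
  rw [preimage_Iic_eLag hH hc r]
  have hvertices : ({x | x ∈ Γ.V ∧ c x ≤ r} ×ˢ {(0 : EucN N)}).Finite :=
    (Γ.finite_V.subset fun _ hx => hx.1).prod (finite_singleton 0)
  exact hvertices.isClosed.union (Γ.finite.isClosed_biUnion fun γ hγ =>
    γ.isClosed_image_smul_deriv (hH.isHam γ hγ).lowerSemicontinuous_lagr r)
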